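/- Let ℓ ≥ 1, k ≥ 0, 1 ≤ p ≤ ℓ, and let μ = (c_1, ..., c_n) be integers with ℓ ≥ c_1 ≥ c_2 ≥ ... ≥ c_n ≥ 0 and Σ_{i=1}^n c_i = 2(kℓ + p). Set Λ = Σ_{i=2k+2}^n c_i (with Λ = 0 if 2k+2 > n). Then there exists a semistandard Young tableau of shape ϱ = (ℓ^{2k}, p, p) with content μ if and only if Λ ≥ p. -/

import Mathlib

/-- `IsSSYT R C r n c T` : the filling `T` (entry `T a b` in row `a`, column `b`,
both 1-indexed) is a semistandard Young tableau of the shape whose `a`-th row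
(for `1 ≤ a ≤ R`) consists of the boxes `(a, b)` with `1 ≤ b ≤ r a` (where
`r a ≤ C`), with entries in `{1, ..., n}`, rows weakly increasing, columns
strictly increasing, and using exactly `c i` entries equal to `i` for each
`1 ≤ i ≤ n`. -/
def IsSSYT (R C : ℕ) (r : ℕ → ℕ) (n : ℕ) (c : ℕ → ℕ) (T : ℕ → ℕ → ℕ) : Prop :=
  (∀ a ∈ Finset.Icc 1 R, ∀ b ∈ Finset.Icc 1 (r a), 1 ≤ T a b ∧ T a b ≤ n) ∧
  (∀ a ∈ Finset.Icc 1 R, ∀ b b' : ℕ, 1 ≤ b → b ≤ b' → b' ≤ r a → T a b ≤ T a b') ∧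
  (∀ a : ℕ, 1 ≤ a → a + 1 ≤ R → ∀ b : ℕ, 1 ≤ b → b ≤ r a → b ≤ r (a + 1) →
    T a b < T (a + 1) b) ∧
  (∀ i : ℕ, 1 ≤ i → i ≤ n →
    ((Finset.Icc 1 R ×ˢ Finset.Icc 1 C).filter
      (fun q => q.2 ≤ r q.1 ∧ T q.1 q.2 = i)).card = c i)

/-- Row lengths of the shape `ϱ = (ℓ^{2k}, p, p)`: rows `1, ..., 2k` have length `ℓ`
and rows `2k+1`, `2k+2` have length `p`. -/
def rhoRow (l k p : ℕ) (a : ℕ) : ℕ := if a ≤ 2 * k then l else p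

/-- A semistandard Young tableau of shape `ϱ = (ℓ^{2k}, p, p)` with content
`(c 1, ..., c n)`. -/
def IsRhoSSYT (l k p n : ℕ) (c : ℕ → ℕ) (T : ℕ → ℕ → ℕ) : Prop :=
  IsSSYT (2 * k + 2) l (rhoRow l k p) n c T

/-- A tableau of shape `ϱ = (ℓ^{2k}, p, p)` is proper if `T (q+2) 1 ≥ T q ℓ`
for all `1 ≤ q ≤ 2k`. -/
def IsProper (l k : ℕ) (T : ℕ → ℕ → ℕ) : Prop :=
  ∀ q : ℕ, 1 ≤ q → q ≤ 2 * k → T q l ≤ T (q + 2) 1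

/-- Two fillings agree on every box of the shape with row lengths `r` and `R` rows. -/
def EqOnShape (R : ℕ) (r : ℕ → ℕ) (T T' : ℕ → ℕ → ℕ) : Prop :=
  ∀ a ∈ Finset.Icc 1 R, ∀ b ∈ Finset.Icc 1 (r a), T a b = T' a b

/-- The content `(c 1, ..., c n)` is `ℓ`-maximal if at least `n - 3` of the
amounts `c i` equal `ℓ`. -/
def IsMaximal (l n : ℕ) (c : ℕ → ℕ) : Prop :=
  n - 3 ≤ ((Finset.Icc 1 n).filter (fun i => c i = l)).card

/-- A filling is normalized if it vanishes outside the boxes of the shape. -/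
def Normalized (R : ℕ) (r : ℕ → ℕ) (T : ℕ → ℕ → ℕ) : Prop :=
  ∀ a b : ℕ, ¬ (1 ≤ a ∧ a ≤ R ∧ 1 ≤ b ∧ b ≤ r a) → T a b = 0

/-!
Necessity: entries strictly increase down the columns, so every entry in row `a` is at least `a`;
the `p` cells of the last row therefore carry entries `≥ 2k + 2`, and there are only `Λ` of those.

Sufficiency: a shape `f` admits a tableau with a (weakly decreasing) content `c` as soon as the
partial sums of `f` dominate those of `c`. By induction on `n`, the `c n` entries equal to `n` fill the
lowest cell of each of the first `c n` columns, a horizontal strip whose removal preserves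
dominance. For `ϱ`, dominance up to row `2k` is `c i ≤ ℓ`, at row `2k + 1` it is `Λ ≥ p`, and
from row `2k + 2` on it is the equality of the total sizes.
-/

open Finset

section Tableau

variable {R C n : ℕ} {r c : ℕ → ℕ} {T : ℕ → ℕ → ℕ}

theorem IsSSYT.congr_rows {r' : ℕ → ℕ} (hT : IsSSYT R C r n c T)
    (h : ∀ a ∈ Icc 1 R, r a = r' a) : IsSSYT R C r' n c T := by
  obtain ⟨hbd, hrow, hcol, hcnt⟩ := hT
  refine ⟨fun a ha => h a ha ▸ hbd a ha, fun a ha => h a ha ▸ hrow a ha, ?_, ?_⟩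
  · intro a ha haR b hb hba hba'
    rw [← h a (mem_Icc.2 ⟨ha, by omega⟩)] at hba
    rw [← h (a + 1) (mem_Icc.2 ⟨by omega, haR⟩)] at hba'
    exact hcol a ha haR b hb hba hba'
  · intro i hi hin
    rw [← hcnt i hi hin]
    congr 1
    refine filter_congr fun q hq => ?_
    rw [h q.1 (mem_product.1 hq).1]

theorem isSSYT_zero_of_rows_eq_zero (h : ∀ a ∈ Icc 1 R, r a = 0) : IsSSYT R C r 0 c T := by
  refine ⟨?_, ?_, ?_, fun i hi hin => by omega⟩
  · intro a ha b hb
    simp only [mem_Icc, h a ha] at hb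
    omega
  · intro a ha b b' hb hbb' hb'
    rw [h a ha] at hb'
    omega
  · intro a ha haR b hb hba
    rw [h a (mem_Icc.2 ⟨ha, by omega⟩)] at hba
    omega

theorem card_cells_filter_eq_sum_rows (hrC : ∀ a, r a ≤ C) (P : ℕ → ℕ → Prop)
    [∀ a b, Decidable (P a b)] :
    ((Icc 1 R ×ˢ Icc 1 C).filter (fun q => q.2 ≤ r q.1 ∧ P q.1 q.2)).card
      = ∑ a ∈ Icc 1 R, ((Icc 1 (r a)).filter (P a)).card := by
  rw [card_filter, sum_product]
  refine sum_congr rfl fun a _ => ?_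
  have hrow : (Icc 1 C).filter (· ≤ r a) = Icc 1 (r a) := by
    ext b
    simp only [mem_filter, mem_Icc]
    have := hrC a
    omega
  simp only [ite_and]
  rw [← sum_filter, hrow, card_filter]

theorem IsSSYT.le_entry (hT : IsSSYT R C r n c T) (hr : Antitone r) :
    ∀ a ∈ Icc 1 R, ∀ b ∈ Icc 1 (r a), a ≤ T a b := by
  intro a
  induction a with
  | zero => simp
  | succ a ih =>
    intro ha b hb
    rcases Nat.eq_zero_or_pos a with rfl | ha0
    · exact (hT.1 1 ha b hb).1
    simp only [mem_Icc] at ha hb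
    have hba : b ≤ r a := hb.2.trans (hr a.le_succ)
    have := ih (mem_Icc.2 ⟨ha0, by omega⟩) b (mem_Icc.2 ⟨hb.1, hba⟩)
    have := hT.2.2.1 a ha0 ha.2 b hb.1 hba hb.2
    omega

theorem IsSSYT.row_length_le_sum_content (hT : IsSSYT R C r n c T) (hrC : ∀ a, r a ≤ C)
    {a : ℕ} (ha : a ∈ Icc 1 R) {s : Finset ℕ} (hs : s ⊆ Icc 1 n)
    (hrow : ∀ b ∈ Icc 1 (r a), T a b ∈ s) : r a ≤ ∑ i ∈ s, c i := by
  classical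
  calc r a = ((Icc 1 (r a)).filter (fun b => T a b ∈ s)).card := by
        rw [filter_true_of_mem hrow, Nat.card_Icc, Nat.add_sub_cancel]
    _ ≤ ∑ a' ∈ Icc 1 R, ((Icc 1 (r a')).filter (fun b => T a' b ∈ s)).card :=
        single_le_sum (f := fun a' => ((Icc 1 (r a')).filter (fun b => T a' b ∈ s)).card)
          (fun _ _ => Nat.zero_le _) ha
    _ = ((Icc 1 R ×ˢ Icc 1 C).filter (fun q => q.2 ≤ r q.1 ∧ T q.1 q.2 ∈ s)).card :=
        (card_cells_filter_eq_sum_rows hrC _).symm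
    _ = ∑ i ∈ s, ((Icc 1 R ×ˢ Icc 1 C).filter (fun q => q.2 ≤ r q.1 ∧ T q.1 q.2 = i)).card := by
        rw [card_eq_sum_card_fiberwise (f := fun q => T q.1 q.2) (t := s)
          fun q hq => (mem_filter.1 hq).2.2]
        refine sum_congr rfl fun i hi => ?_
        rw [filter_filter]
        congr 1
        refine filter_congr fun q _ => ?_
        constructor
        · rintro ⟨⟨hq, -⟩, rfl⟩
          exact ⟨hq, rfl⟩
        · rintro ⟨hq, rfl⟩
          exact ⟨⟨hq, hi⟩, rfl⟩
    _ = ∑ i ∈ s, c i := by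
        refine sum_congr rfl fun i hi => ?_
        have := mem_Icc.1 (hs hi)
        exact hT.2.2.2 i this.1 this.2

theorem IsSSYT.add_horizontal_strip {f f' : ℕ → ℕ} (hT : IsSSYT R C f' n c T) (hfC : ∀ a, f a ≤ C)
    (hle : ∀ a, f' a ≤ f a) (hstrip : ∀ a, f (a + 1) ≤ f' a)
    (hcard : ∑ a ∈ Icc 1 R, (f a - f' a) = c (n + 1)) :
    IsSSYT R C f (n + 1) c (fun a b => if b ≤ f' a then T a b else n + 1) := by
  obtain ⟨hbd, hrow, hcol, hcnt⟩ := hT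
  have hTn : ∀ a ∈ Icc 1 R, ∀ b, 1 ≤ b → b ≤ f' a → T a b ≤ n :=
    fun a ha b hb hba => (hbd a ha b (mem_Icc.2 ⟨hb, hba⟩)).2
  refine ⟨?_, ?_, ?_, ?_⟩
  · intro a ha b hb
    simp only [mem_Icc] at hb
    dsimp only
    split_ifs with hba
    · have := hbd a ha b (mem_Icc.2 ⟨hb.1, hba⟩)
      omega
    · omega
  · intro a ha b b' hb hbb' hb'
    dsimp only
    split_ifs with h1 h2 h2
    · exact hrow a ha b b' hb hbb' h2
    · have := hTn a ha b hb h1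
      omega
    · omega
    · rfl
  · intro a ha haR b hb hba hba'
    have htop : b ≤ f' a := hba'.trans (hstrip a)
    dsimp only
    rw [if_pos htop]
    split_ifs with hbot
    · exact hcol a ha haR b hb htop hbot
    · have := hTn a (mem_Icc.2 ⟨ha, by omega⟩) b hb htop
      omega
  · intro i hi hin
    rw [card_cells_filter_eq_sum_rows hfC fun a b => (if b ≤ f' a then T a b else n + 1) = i]
    rcases Nat.lt_or_eq_of_le hin with hin | rfl
    · rw [← hcnt i hi (by omega),
        card_cells_filter_eq_sum_rows (fun a => (hle a).trans (hfC a)) fun a b => T a b = i]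
      refine sum_congr rfl fun a ha => ?_
      congr 1
      ext b
      simp only [mem_filter, mem_Icc]
      have := hle a
      split_ifs with hba <;> omega
    · rw [← hcard]
      refine sum_congr rfl fun a ha => ?_
      have hrow : (Icc 1 (f a)).filter (fun b => (if b ≤ f' a then T a b else n + 1) = n + 1)
          = Ioc (f' a) (f a) := by
        ext b
        simp only [mem_filter, mem_Icc, mem_Ioc]
        split_ifs with hba
        · have := hTn a ha b
          omega
        · omega
      rw [hrow, Nat.card_Ioc]

end Tableau

section Strip

variable {f : ℕ → ℕ} {m : ℕ}

/-- Row lengths of the shape `f` with the lowest cell of each of its first `m` columns removed: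
row `a` keeps its cells in columns `≤ f (a + 1)` and those in columns `> m`. -/
def removeStrip (f : ℕ → ℕ) (m a : ℕ) : ℕ := f a - m + min (f (a + 1)) m

theorem removeStrip_le (hf : Antitone f) (a : ℕ) : removeStrip f m a ≤ f a := by
  have : f (a + 1) ≤ f a := hf (by omega)
  unfold removeStrip
  omega

theorem le_removeStrip (hf : Antitone f) (a : ℕ) : f (a + 1) ≤ removeStrip f m a := by
  have : f (a + 1) ≤ f a := hf (by omega)
  unfold removeStrip
  omega

theorem antitone_removeStrip (hf : Antitone f) : Antitone (removeStrip f m) :=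
  antitone_nat_of_succ_le fun a => (removeStrip_le hf (a + 1)).trans (le_removeStrip hf a)

theorem sum_removeStrip_add (hf : Antitone f) (hm : m ≤ f 1) (j : ℕ) :
    ∑ a ∈ Icc 1 j, removeStrip f m a + (m - min (f (j + 1)) m) = ∑ a ∈ Icc 1 j, f a := by
  induction j with
  | zero => simp [hm]
  | succ j ih =>
    rw [sum_Icc_succ_top (by omega), sum_Icc_succ_top (by omega)]
    have : f (j + 1 + 1) ≤ f (j + 1) := hf (by omega)
    have : removeStrip f m (j + 1) = f (j + 1) - m + min (f (j + 1 + 1)) m := rfl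
    omega

end Strip

theorem exists_isSSYT_of_dominates {R C n : ℕ} {f c : ℕ → ℕ} (hf : Antitone f)
    (hfC : ∀ a, f a ≤ C) (hfR : f (R + 1) = 0) (hc : AntitoneOn c (Set.Icc 1 n))
    (hdom : ∀ j ≤ n, ∑ i ∈ Icc 1 j, c i ≤ ∑ a ∈ Icc 1 j, f a)
    (htot : ∑ a ∈ Icc 1 R, f a = ∑ i ∈ Icc 1 n, c i) : ∃ T, IsSSYT R C f n c T := by
  induction n generalizing f with
  | zero =>
    refine ⟨fun _ _ => 0, isSSYT_zero_of_rows_eq_zero ?_⟩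
    simpa [sum_eq_zero_iff] using htot
  | succ n ih =>
    set m := c (n + 1)
    have hm : m ≤ f 1 := by
      have hc1 : m ≤ c 1 := hc (by simp) (by simp) (by omega)
      have := hdom 1 (by omega)
      simp only [Icc_self, sum_singleton] at this
      omega
    have hsum := sum_removeStrip_add hf hm
    have hlast := sum_removeStrip_add hf hm R
    rw [hfR] at hlast
    have hdom' : ∀ j ≤ n, ∑ i ∈ Icc 1 j, c i ≤ ∑ a ∈ Icc 1 j, removeStrip f m a := by
      intro j hj
      have hcj : m ≤ c (j + 1) := hc (by simp [hj]) (by simp) (by omega)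
      have h1 := hdom j (by omega)
      have h2 := hdom (j + 1) (by omega)
      rw [sum_Icc_succ_top (by omega), sum_Icc_succ_top (by omega)] at h2
      have := hsum j
      omega
    have htot' : ∑ a ∈ Icc 1 R, removeStrip f m a = ∑ i ∈ Icc 1 n, c i := by
      rw [sum_Icc_succ_top (by omega)] at htot
      omega
    obtain ⟨T, hT⟩ := ih (antitone_removeStrip hf) (fun a => (removeStrip_le hf a).trans (hfC a))
      (Nat.eq_zero_of_le_zero (hfR ▸ removeStrip_le hf (R + 1)))
      (hc.mono (Set.Icc_subset_Icc_right n.le_succ)) hdom' htot'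
    refine ⟨_, hT.add_horizontal_strip hfC (removeStrip_le hf) (le_removeStrip hf) ?_⟩
    rw [sum_tsub_distrib _ fun a _ => removeStrip_le hf a]
    omega

section Rho

variable {l k p n : ℕ} {c : ℕ → ℕ}

theorem antitone_rhoRow (hpl : p ≤ l) : Antitone (rhoRow l k p) := by
  intro a b hab
  unfold rhoRow
  split_ifs <;> omega

theorem rhoRow_le (hpl : p ≤ l) (a : ℕ) : rhoRow l k p a ≤ l := by
  unfold rhoRow
  split_ifs <;> omega

theorem le_sum_content_of_isRhoSSYT {T : ℕ → ℕ → ℕ} (hpl : p ≤ l)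
    (hT : IsRhoSSYT l k p n c T) : p ≤ ∑ i ∈ Icc (2 * k + 2) n, c i := by
  have hlast : 2 * k + 2 ∈ Icc 1 (2 * k + 2) := by simp
  calc p = rhoRow l k p (2 * k + 2) := (if_neg (by omega)).symm
    _ ≤ _ := hT.row_length_le_sum_content (rhoRow_le hpl) hlast (Icc_subset_Icc_left (by omega))
        fun b hb => mem_Icc.2 ⟨hT.le_entry (antitone_rhoRow hpl) _ hlast b hb,
          (hT.1 _ hlast b hb).2⟩

def rhoShape (l k p a : ℕ) : ℕ := if a ≤ 2 * k + 2 then rhoRow l k p a else 0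

theorem antitone_rhoShape (hpl : p ≤ l) : Antitone (rhoShape l k p) := by
  intro a b hab
  unfold rhoShape rhoRow
  split_ifs <;> omega

theorem rhoShape_le (hpl : p ≤ l) (a : ℕ) : rhoShape l k p a ≤ l := by
  unfold rhoShape rhoRow
  split_ifs <;> omega

theorem sum_rhoShape_of_le {j : ℕ} (hj : j ≤ 2 * k) :
    ∑ a ∈ Icc 1 j, rhoShape l k p a = j * l := by
  rw [sum_congr rfl fun a ha => show rhoShape l k p a = l by
    simp only [rhoShape, rhoRow, mem_Icc] at ha ⊢
    rw [if_pos (by omega), if_pos (by omega)]]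
  simp

theorem sum_rhoShape_two_mul_add_one :
    ∑ a ∈ Icc 1 (2 * k + 1), rhoShape l k p a = 2 * k * l + p := by
  rw [sum_Icc_succ_top (by omega), sum_rhoShape_of_le le_rfl]
  simp [rhoShape, rhoRow]

theorem sum_rhoShape_of_ge {j : ℕ} (hj : 2 * k + 2 ≤ j) :
    ∑ a ∈ Icc 1 j, rhoShape l k p a = 2 * (k * l + p) := by
  induction j, hj using Nat.le_induction with
  | base =>
    rw [sum_Icc_succ_top (by omega), sum_rhoShape_two_mul_add_one, rhoShape, if_pos le_rfl,
      rhoRow, if_neg (by omega)]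
    ring
  | succ j hj ih =>
    rw [sum_Icc_succ_top (by omega), ih, rhoShape, if_neg (by omega), add_zero]

theorem sum_content_le_sum_rhoShape (hbd : ∀ i : ℕ, 1 ≤ i → i ≤ n → c i ≤ l)
    (hsum : ∑ i ∈ Icc 1 n, c i = 2 * (k * l + p))
    (hΛ : p ≤ ∑ i ∈ Icc (2 * k + 2) n, c i) :
    ∀ j ≤ n, ∑ i ∈ Icc 1 j, c i ≤ ∑ a ∈ Icc 1 j, rhoShape l k p a := by
  intro j hj
  rcases le_or_gt j (2 * k) with hjk | hjk
  · rw [sum_rhoShape_of_le hjk]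
    calc ∑ i ∈ Icc 1 j, c i ≤ ∑ _ ∈ Icc 1 j, l :=
          sum_le_sum fun i hi => hbd i (mem_Icc.1 hi).1 ((mem_Icc.1 hi).2.trans hj)
      _ = j * l := by simp
  rcases le_or_gt j (2 * k + 1) with hjk' | hjk'
  · obtain rfl : j = 2 * k + 1 := by omega
    have hsplit : ∑ i ∈ Icc 1 (2 * k + 1), c i + ∑ i ∈ Icc (2 * k + 2) n, c i
        = ∑ i ∈ Icc 1 n, c i := by
      have := sum_Ioc_consecutive c (Nat.zero_le (2 * k + 1)) hj
      rwa [← Icc_add_one_left_eq_Ioc, ← Icc_add_one_left_eq_Ioc, ← Icc_add_one_left_eq_Ioc]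
        at this
    rw [sum_rhoShape_two_mul_add_one]
    linarith
  · rw [sum_rhoShape_of_ge hjk', ← hsum]
    exact sum_le_sum_of_subset (Icc_subset_Icc_right hj)

theorem exists_isRhoSSYT (hpl : p ≤ l) (hbd : ∀ i : ℕ, 1 ≤ i → i ≤ n → c i ≤ l)
    (hc : AntitoneOn c (Set.Icc 1 n)) (hsum : ∑ i ∈ Icc 1 n, c i = 2 * (k * l + p))
    (hΛ : p ≤ ∑ i ∈ Icc (2 * k + 2) n, c i) : ∃ T, IsRhoSSYT l k p n c T := by
  obtain ⟨T, hT⟩ := exists_isSSYT_of_dominates (R := 2 * k + 2) (antitone_rhoShape hpl)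
    (rhoShape_le hpl) (by simp [rhoShape]) hc (sum_content_le_sum_rhoShape hbd hsum hΛ)
    (by rw [sum_rhoShape_of_ge le_rfl, hsum])
  exact ⟨T, hT.congr_rows fun a ha => if_pos (mem_Icc.1 ha).2⟩

end Rho

theorem stmt14_general (l k p n : ℕ) (c : ℕ → ℕ)
    (hpl : p ≤ l)
    (hbd : ∀ i : ℕ, 1 ≤ i → i ≤ n → c i ≤ l)
    (hmono : ∀ i j : ℕ, 1 ≤ i → i ≤ j → j ≤ n → c j ≤ c i)
    (hsum : ∑ i ∈ Finset.Icc 1 n, c i = 2 * (k * l + p)) :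
    (∃ T : ℕ → ℕ → ℕ, IsRhoSSYT l k p n c T) ↔
      p ≤ ∑ i ∈ Finset.Icc (2 * k + 2) n, c i :=
  ⟨fun ⟨_, hT⟩ => le_sum_content_of_isRhoSSYT hpl hT,
    exists_isRhoSSYT hpl hbd (fun i hi j hj hij => hmono i j hi.1 hij hj.2) hsum⟩

/-- There exists a semistandard Young tableau of shape `ϱ = (ℓ^{2k}, p, p)` with
content `μ` if and only if `Λ ≥ p`. -/
theorem stmt14 (l k p n : ℕ) (c : ℕ → ℕ)
    (hl : 1 ≤ l) (hp : 1 ≤ p) (hpl : p ≤ l)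
    (hbd : ∀ i : ℕ, 1 ≤ i → i ≤ n → c i ≤ l)
    (hmono : ∀ i j : ℕ, 1 ≤ i → i ≤ j → j ≤ n → c j ≤ c i)
    (hsum : ∑ i ∈ Finset.Icc 1 n, c i = 2 * (k * l + p)) :
    (∃ T : ℕ → ℕ → ℕ, IsRhoSSYT l k p n c T) ↔
      p ≤ ∑ i ∈ Finset.Icc (2 * k + 2) n, c i :=
  stmt14_general l k p n c hpl hbd hmono hsum
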